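/- arXiv:2508.19392 — 2 statements merged into one kernel-verified Lean document; each statement's English description precedes it below -/
import Mathlib

section
/- Let R ⊆ ℕ^{p+1} with characteristic function h_R taking values in {0,1}, and let f be the solution of the IVP f(0, y) = h_R(0, y), f(x+1, y) = f(x, y) + (ℓ(x+1) - ℓ(x))·h_R(ℓ(x+1), y). Then for all x and y, sg(f(x, y)) = 1 if and only if there exists z ≤ ℓ(x) with R(z, y). -/
def ell (x : ℕ) : ℕ := Nat.clog 2 (x + 1)

def sg (x : ℕ) : ℕ := if 0 < x then 1 else 0

lemma ell_mono (x : ℕ) : ell x ≤ ell (x + 1) :=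
  Nat.clog_mono_right 2 (by omega)

lemma ell_succ_le (x : ℕ) : ell (x + 1) ≤ ell x + 1 := by
  rw [ell, Nat.clog_le_iff_le_pow (by norm_num)]
  have h := Nat.le_pow_clog (b := 2) (by norm_num) (x + 1)
  calc x + 1 + 1 ≤ 2 * (x + 1) := by omega
    _ ≤ 2 * 2 ^ Nat.clog 2 (x + 1) := by omega
    _ = 2 ^ (ell x + 1) := by rw [ell, pow_succ]; ring

theorem bounded_exists_via_ODE1 (p : ℕ) (R : ℕ → (Fin p → ℕ) → Prop)
    [∀ z y, Decidable (R z y)]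
    (hR : ℕ → (Fin p → ℕ) → ℕ)
    (hRdef : ∀ z y, hR z y = if R z y then 1 else 0)
    (f : ℕ → (Fin p → ℕ) → ℕ)
    (h0 : ∀ y, f 0 y = hR 0 y)
    (hrec : ∀ x y, f (x + 1) y = f x y + (ell (x + 1) - ell x) * hR (ell (x + 1)) y) :
    ∀ x y, sg (f x y) = 1 ↔ ∃ z ≤ ell x, R z y := by
  have key : ∀ x y, 0 < f x y ↔ ∃ z ≤ ell x, R z y := by
    intro x y
    induction x with
    | zero =>
      rw [h0, hRdef]
      have : ell 0 = 0 := by simp [ell, Nat.clog_one_right]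
      rw [this]
      constructor
      · intro h
        refine ⟨0, le_refl _, ?_⟩
        by_contra hc; simp [hc] at h
      · rintro ⟨z, hz, hRz⟩
        interval_cases z
        simp [hRz]
    | succ n ih =>
      rw [hrec, hRdef]
      have h1 := ell_mono n
      have h2 := ell_succ_le n
      rcases Nat.lt_or_ge (ell n) (ell (n + 1)) with h | h
      · have he : ell (n + 1) = ell n + 1 := by omega
        have hd : ell (n + 1) - ell n = 1 := by omega
        rw [hd, one_mul]
        constructor
        · intro hpos
          by_cases hr : R (ell (n + 1)) y
          · exact ⟨ell (n + 1), le_refl _, hr⟩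
          · simp [hr] at hpos
            obtain ⟨z, hz, hrz⟩ := ih.mp (by omega)
            exact ⟨z, by omega, hrz⟩
        · rintro ⟨z, hz, hrz⟩
          by_cases hzn : z ≤ ell n
          · have := ih.mpr ⟨z, hzn, hrz⟩; omega
          · have : z = ell (n + 1) := by omega
            subst this
            simp [hrz]
      · have he : ell (n + 1) = ell n := by omega
        have hd : ell (n + 1) - ell n = 0 := by omega
        rw [hd, zero_mul, add_zero, he]
        exact ih
  intro x y
  rw [sg]
  constructor
  · intro h
    have : 0 < f x y := by by_contra hc; simp [Nat.le_zero.mp (not_lt.mp hc)] at h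
    exact (key x y).mp this
  · intro h
    simp [(key x y).mpr h]
end

section
/- Let g : ℕ^p → ℕ, k : ℕ^p → ℕ, and h : ℕ × ℕ^p → {0,1}, and let f be the solution of f(0, y) = g(y), f(x+1, y) = f(x, y) + (ℓ(x+1) - ℓ(x))·((2^{ℓ(k(y))} - 1)·f(x, y) + h(x, y)). Then for all x and y, f(x, y) = ∑_{u=-1}^{ℓ(x)-1} 2^{ℓ(k(y))·(ℓ(x)-u-1)} · h(α(u), y), with the conventions α(u) = 2^u - 1 and h(α(-1), y) = g(y). -/
lemma ell_step (x : ℕ) :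
    ell (x + 1) = ell x ∨ (x = 2 ^ ell x - 1 ∧ ell (x + 1) = ell x + 1) := by
  have hb : (1:ℕ) < 2 := one_lt_two
  have hle : x + 1 ≤ 2 ^ ell x := Nat.le_pow_clog hb _
  rcases lt_or_eq_of_le hle with hlt | heq
  · left
    have h1 : ell (x + 1) ≤ ell x := (Nat.clog_le_iff_le_pow hb).mpr (by omega)
    have h2 : ell x ≤ ell (x + 1) := Nat.clog_mono_right _ (by omega)
    omega
  · right
    refine ⟨by omega, ?_⟩
    have h1 : ell x < ell (x + 1) := (Nat.lt_clog_iff_pow_lt hb).mpr (by omega)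
    have h2 : ell (x + 1) ≤ ell x + 1 := (Nat.clog_le_iff_le_pow hb).mpr (by
      rw [pow_succ]
      have : 1 ≤ 2 ^ ell x := Nat.one_le_two_pow
      omega)
    omega

/-- Closed form solution of the ℓ-ODE₂ schema. The sum index `v` ranges over
`0..ℓ(x)`, where `v` corresponds to `u = v - 1` ranging over `-1..ℓ(x)-1`,
with the conventions `α(u) = 2^u - 1` and `h(α(-1), y) = g(y)`. -/
theorem ODE2_closed_form (p : ℕ) (g k : (Fin p → ℕ) → ℕ)
    (h : ℕ → (Fin p → ℕ) → ℕ) (hbit : ∀ x y, h x y ≤ 1)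
    (f : ℕ → (Fin p → ℕ) → ℕ)
    (h0 : ∀ y, f 0 y = g y)
    (hrec : ∀ x y, f (x + 1) y =
      f x y + (ell (x + 1) - ell x) * ((2 ^ ell (k y) - 1) * f x y + h x y)) :
    ∀ x y, f x y = ∑ v ∈ Finset.range (ell x + 1),
      2 ^ (ell (k y) * (ell x - v)) * (if v = 0 then g y else h (2 ^ (v - 1) - 1) y) := by
  intro x
  induction x with
  | zero =>
    intro y
    have : ell 0 = 0 := by simp [ell, Nat.clog_one_right]
    simp [this, h0]
  | succ x ih =>
    intro y
    rcases ell_step x with hsame | ⟨hx, hsucc⟩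
    · rw [hrec, hsame, ih y]
      simp
    · rw [hrec x y, hsucc, ih y]
      set L := ell (k y) with hL
      set m := ell x with hm
      have h2L : 1 ≤ 2 ^ L := Nat.one_le_two_pow
      have hms : m + 1 - m = 1 := by omega
      rw [hms, one_mul]
      conv_rhs => rw [Finset.sum_range_succ]
      have hlast : (2:ℕ) ^ (L * (m + 1 - (m + 1))) *
          (if m + 1 = 0 then g y else h (2 ^ (m + 1 - 1) - 1) y) = h x y := by
        simp [hx]
      rw [hlast]
      have hrest : ∑ v ∈ Finset.range (m + 1),
          2 ^ (L * (m + 1 - v)) * (if v = 0 then g y else h (2 ^ (v - 1) - 1) y)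
          = 2 ^ L * ∑ v ∈ Finset.range (m + 1),
          2 ^ (L * (m - v)) * (if v = 0 then g y else h (2 ^ (v - 1) - 1) y) := by
        rw [Finset.mul_sum]
        apply Finset.sum_congr rfl
        intro v hv
        have hv' : v ≤ m := by simpa [Nat.lt_succ_iff] using hv
        rw [← mul_assoc, ← pow_add]
        congr 2
        have : m + 1 - v = (m - v) + 1 := by omega
        rw [this]
        ring
      rw [hrest]
      set S := ∑ v ∈ Finset.range (m + 1),
          2 ^ (L * (m - v)) * (if v = 0 then g y else h (2 ^ (v - 1) - 1) y) with hS
      obtain ⟨c, hc⟩ := Nat.exists_eq_add_of_le h2L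
      rw [hc, Nat.add_sub_cancel_left]
      ring
end
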